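/- arXiv:1607.00713 — 4 statements merged into one kernel-verified Lean document; each statement's English description precedes it below -/
import Mathlib

section
/- Let (R, α) be a regular Hom-Lie conformal algebra and s a fixed integer. Then R with the λ-action a_λ b := [α^s(a)_λ b] and the map α is a module over (R, α). -/
open Polynomial

/-- A Hom-Lie conformal algebra.  The carrier `R` is a `ℂ[∂]`-module (here the
action of `∂` is the action of `Polynomial.X`), `alpha` is a `ℂ[∂]`-linear map
(so it is `ℂ`-linear and commutes with `∂`), and the λ-bracket is modelled as a
family of `ℂ`-bilinear maps indexed by `λ ∈ ℂ[∂]` (so that substitutions such as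
`λ ↦ -∂-λ` make sense). -/
structure HLCA (R : Type*) [AddCommGroup R] [Module (Polynomial ℂ) R] where
  alpha : R →ₗ[Polynomial ℂ] R
  br : Polynomial ℂ → R → R → R
  br_add_left : ∀ l a a' b, br l (a + a') b = br l a b + br l a' b
  br_add_right : ∀ l a b b', br l a (b + b') = br l a b + br l a b'
  br_smul_left : ∀ l (c : ℂ) a b, br l ((C c) • a) b = (C c) • br l a b
  br_smul_right : ∀ l (c : ℂ) a b, br l a ((C c) • b) = (C c) • br l a b
  sesq_left : ∀ l a b, br l ((X : Polynomial ℂ) • a) b = (-l) • br l a b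
  sesq_right : ∀ l a b,
    br l a ((X : Polynomial ℂ) • b) = ((X : Polynomial ℂ) + l) • br l a b
  skew : ∀ l a b, br l a b = - br (-(X : Polynomial ℂ) - l) b a
  jacobi : ∀ l m a b c,
    br l (alpha a) (br m b c)
      = br (l + m) (br l a b) (alpha c) + br m (alpha b) (br l a c)

/-- A Hom-Lie conformal algebra is multiplicative if `α` is a homomorphism for
the λ-bracket. -/
def HLCA.Multiplicative {R : Type*} [AddCommGroup R] [Module (Polynomial ℂ) R]
    (L : HLCA R) : Prop :=
  ∀ l a b, L.alpha (L.br l a b) = L.br l (L.alpha a) (L.alpha b)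
/-- A module `(M, β)` over a Hom-Lie conformal algebra `(R, α)`. -/
structure HLCAMod {R : Type*} [AddCommGroup R] [Module (Polynomial ℂ) R]
    (L : HLCA R) (M : Type*) [AddCommGroup M] [Module (Polynomial ℂ) M] where
  beta : M →ₗ[Polynomial ℂ] M
  act : Polynomial ℂ → R → M → M
  act_add_left : ∀ l a a' v, act l (a + a') v = act l a v + act l a' v
  act_add_right : ∀ l a v w, act l a (v + w) = act l a v + act l a w
  act_smul_left : ∀ l (c : ℂ) a v, act l ((C c) • a) v = (C c) • act l a v
  act_smul_right : ∀ l (c : ℂ) a v, act l a ((C c) • v) = (C c) • act l a v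
  act_sesq_left : ∀ l a v, act l ((X : Polynomial ℂ) • a) v = (-l) • act l a v
  act_sesq_right : ∀ l a v,
    act l a ((X : Polynomial ℂ) • v) = ((X : Polynomial ℂ) + l) • act l a v
  act_compat : ∀ l m a b v,
    act l (L.alpha a) (act m b v) - act m (L.alpha b) (act l a v)
      = act (l + m) (L.br l a b) (beta v)
  beta_act : ∀ l a v, beta (act l a v) = act l (L.alpha a) (beta v)

/-!
The automorphisms of `(R, α)` (linear automorphisms commuting with `α` and preserving the
bracket) form a group containing `α`, hence every `α^s`. For any such automorphism `φ`, the
Hom-Jacobi identity for `φ a, φ b, v` together with `φ [a_λ b] = [φ a_λ φ b]` is exactly the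
module axiom for `a_λ v := [φ(a)_λ v]`.
-/

namespace HLCA

variable {R : Type*} [AddCommGroup R] [Module (Polynomial ℂ) R] (L : HLCA R)

def autGroup : Subgroup (R ≃ₗ[Polynomial ℂ] R) where
  carrier := {φ | (∀ a, φ (L.alpha a) = L.alpha (φ a)) ∧
    ∀ l a b, φ (L.br l a b) = L.br l (φ a) (φ b)}
  one_mem' := ⟨fun _ => rfl, fun _ _ _ => rfl⟩
  mul_mem' := by
    rintro φ ψ ⟨hφα, hφbr⟩ ⟨hψα, hψbr⟩
    exact ⟨fun a => by simp only [LinearEquiv.mul_apply, hψα, hφα],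
      fun l a b => by simp only [LinearEquiv.mul_apply, hψbr, hφbr]⟩
  inv_mem' := by
    rintro φ ⟨hφα, hφbr⟩
    refine ⟨fun a => φ.injective ?_, fun l a b => φ.injective ?_⟩
    · simp only [LinearEquiv.coe_inv, hφα, LinearEquiv.apply_symm_apply]
    · simp only [LinearEquiv.coe_inv, hφbr, LinearEquiv.apply_symm_apply]

theorem mem_autGroup_of_eq_alpha (hL : L.Multiplicative) {e : R ≃ₗ[Polynomial ℂ] R}
    (he : ∀ a, e a = L.alpha a) : e ∈ L.autGroup :=
  ⟨fun a => by rw [he, he], fun l a b => by rw [he, he, he, hL]⟩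

noncomputable def twistedAdjointMod (hL : L.Multiplicative) (φ : R ≃ₗ[Polynomial ℂ] R)
    (hφ : φ ∈ L.autGroup) : HLCAMod L R where
  beta := L.alpha
  act l a b := L.br l (φ a) b
  act_add_left l a a' v := by rw [map_add, L.br_add_left]
  act_add_right l a v w := L.br_add_right _ _ _ _
  act_smul_left l c a v := by rw [map_smul, L.br_smul_left]
  act_smul_right l c a v := L.br_smul_right _ _ _ _
  act_sesq_left l a v := by rw [map_smul, L.sesq_left]
  act_sesq_right l a v := L.sesq_right _ _ _
  act_compat l m a b v := by
    rw [hφ.1, hφ.1, hφ.2, L.jacobi]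
    abel
  beta_act l a v := by rw [hL, hφ.1]

end HLCA

/-- Let `(R, α)` be a regular Hom-Lie conformal algebra
(`α` is a bijective homomorphism, modelled by the linear equivalence `e`) and
`s` a fixed integer.  Then `R` with the λ-action `a_λ b := [α^s(a)_λ b]` and
the map `α` is a module over `(R, α)`. -/
theorem stmt3 {R : Type*} [AddCommGroup R] [Module (Polynomial ℂ) R]
    (L : HLCA R) (hL : L.Multiplicative)
    (e : R ≃ₗ[Polynomial ℂ] R) (he : ∀ a, e a = L.alpha a) (s : ℤ) :
    ∃ Mo : HLCAMod L R,
      Mo.beta = L.alpha ∧ ∀ l a b, Mo.act l a b = L.br l ((e ^ s) a) b :=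
  ⟨L.twistedAdjointMod hL (e ^ s) (zpow_mem (L.mem_autGroup_of_eq_alpha hL he) s),
    rfl, fun _ _ _ => rfl⟩
end

section
/- Let (R, α) be a multiplicative Hom-Lie conformal algebra and a ∈ R with α(a) = a. Then the map D_k(a) defined by D_k(a)_λ(b) = [a_λ α^k(b)] is an α^{k+1}-derivation of R, i.e., it is a conformal linear map commuting with α and satisfying D_k(a)_λ([b_μ c]) = [(D_k(a)_λ(b))_{λ+μ} α^{k+1}(c)] + [α^{k+1}(b)_μ (D_k(a)_λ(c))]. -/
open Polynomial

/-- A conformal linear map `D : R → R[λ]`, modelled as a family `D_λ` indexed by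
`λ ∈ ℂ[∂]`: `ℂ`-linear with `D_λ(∂a) = (∂+λ) D_λ(a)`. -/
structure IsConfLin {R : Type*} [AddCommGroup R] [Module (Polynomial ℂ) R]
    (D : Polynomial ℂ → R → R) : Prop where
  map_add : ∀ l a b, D l (a + b) = D l a + D l b
  map_smul : ∀ l (c : ℂ) a, D l ((C c) • a) = (C c) • D l a
  conf : ∀ l a, D l ((X : Polynomial ℂ) • a) = ((X : Polynomial ℂ) + l) • D l a

/-- Membership in `Ω = {D ∈ Cend(R) | D_λ ∘ α = α ∘ D_λ}`. -/
def InOmega {R : Type*} [AddCommGroup R] [Module (Polynomial ℂ) R]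
    (L : HLCA R) (D : Polynomial ℂ → R → R) : Prop :=
  IsConfLin D ∧ ∀ l a, D l (L.alpha a) = L.alpha (D l a)

/-- `D` is an `α^k`-derivation of `(R, α)`. -/
def IsDer {R : Type*} [AddCommGroup R] [Module (Polynomial ℂ) R]
    (L : HLCA R) (k : ℕ) (D : Polynomial ℂ → R → R) : Prop :=
  InOmega L D ∧
    ∀ l m a b,
      D l (L.br m a b)
        = L.br (l + m) (D l a) ((⇑L.alpha)^[k] b)
          + L.br m ((⇑L.alpha)^[k] a) (D l b)

/-- The conformal commutator `[D_λ H]_μ(a) = D_λ(H_{μ−λ}(a)) − H_{μ−λ}(D_λ(a))`. -/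
noncomputable def cComm {R : Type*} [AddCommGroup R] [Module (Polynomial ℂ) R]
    (D H : Polynomial ℂ → R → R) (l m : Polynomial ℂ) (a : R) : R :=
  D l (H (m - l) a) - H (m - l) (D l a)

/-! For `α(a) = a` the Hom-Jacobi identity with first argument `a` is exactly the `α`-derivation
law for `[a_λ ·]`. Applying it to `α^k b`, `α^k c` and pulling `α^k` out of `[b_μ c]` by
multiplicativity turns it into the `α^{k+1}`-derivation law for `[a_λ α^k(·)]`. -/

namespace HLCA

variable {R : Type*} [AddCommGroup R] [Module (Polynomial ℂ) R] (L : HLCA R)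

theorem isConfLin_br_comp (a : R) (f : R →ₗ[ℂ[X]] R) :
    IsConfLin (fun l b => L.br l a (f b)) where
  map_add l b c := by rw [map_add, L.br_add_right]
  map_smul l c b := by rw [map_smul, L.br_smul_right]
  conf l b := by rw [map_smul, L.sesq_right]

theorem br_br_of_alpha_eq_self {a : R} (ha : L.alpha a = a) (l m : ℂ[X]) (b c : R) :
    L.br l a (L.br m b c)
      = L.br (l + m) (L.br l a b) (L.alpha c) + L.br m (L.alpha b) (L.br l a c) := by
  simpa only [ha] using L.jacobi l m a b c

theorem Multiplicative.iterate_alpha_br {L : HLCA R} (hL : L.Multiplicative) (k : ℕ) (l : ℂ[X])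
    (b c : R) : (⇑L.alpha)^[k] (L.br l b c) = L.br l ((⇑L.alpha)^[k] b) ((⇑L.alpha)^[k] c) := by
  induction k with
  | zero => rfl
  | succ k ih =>
    simp only [Function.iterate_succ_apply']
    rw [ih, hL]

end HLCA

/-- Let `(R, α)` be a multiplicative Hom-Lie conformal algebra
and `a ∈ R` with `α(a) = a`.  Then `D_k(a)_λ(b) = [a_λ α^k(b)]` is an
`α^{k+1}`-derivation of `R`. -/
theorem stmt7 {R : Type*} [AddCommGroup R] [Module (Polynomial ℂ) R]
    (L : HLCA R) (hL : L.Multiplicative) (a : R) (ha : L.alpha a = a) (k : ℕ) :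
    IsDer L (k + 1) (fun l b => L.br l a ((⇑L.alpha)^[k] b)) := by
  refine ⟨⟨?_, fun l b => ?_⟩, fun l m b c => ?_⟩
  · simpa only [Module.End.coe_pow] using L.isConfLin_br_comp a (L.alpha ^ k)
  · beta_reduce
    rw [← Function.iterate_succ_apply, Function.iterate_succ_apply', hL, ha]
  · beta_reduce
    rw [hL.iterate_alpha_br, L.br_br_of_alpha_eq_self ha, Function.iterate_succ_apply',
      Function.iterate_succ_apply']
end

section
/- Let (R, α) be a multiplicative Hom-Lie conformal algebra with α surjective, and let Z(R) be the center of R. Then for D₁ ∈ C_{α^k}(R) (a centroid element) and D₂ ∈ QC_{α^s}(R) (a quasicentroid element), the commutator [D₁_μ D₂] takes values in Z(R)[μ], i.e., [C(R)_λ QC(R)] ⊆ Chom(R, Z(R))[λ]. Moreover if Z(R) = 0 then [C(R)_λ QC(R)] = 0. -/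
open Polynomial

/-- `D` is a generalized `α^k`-derivation: there are `D', D'' ∈ Ω` with
`[(D_μ a)_{λ+μ} α^k(b)] + [α^k(a)_λ (D'_μ b)] = D''_μ([a_λ b])`. -/
def IsGDer {R : Type*} [AddCommGroup R] [Module (Polynomial ℂ) R]
    (L : HLCA R) (k : ℕ) (D : Polynomial ℂ → R → R) : Prop :=
  InOmega L D ∧
    ∃ D' D'', InOmega L D' ∧ InOmega L D'' ∧
      ∀ l m a b,
        L.br (l + m) (D m a) ((⇑L.alpha)^[k] b)
            + L.br l ((⇑L.alpha)^[k] a) (D' m b)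
          = D'' m (L.br l a b)

/-- `D` is an `α^k`-quasiderivation: there is `D' ∈ Ω` with
`[(D_μ a)_{λ+μ} α^k(b)] + [α^k(a)_λ (D_μ b)] = D'_μ([a_λ b])`. -/
def IsQDer {R : Type*} [AddCommGroup R] [Module (Polynomial ℂ) R]
    (L : HLCA R) (k : ℕ) (D : Polynomial ℂ → R → R) : Prop :=
  InOmega L D ∧
    ∃ D', InOmega L D' ∧
      ∀ l m a b,
        L.br (l + m) (D m a) ((⇑L.alpha)^[k] b)
            + L.br l ((⇑L.alpha)^[k] a) (D m b)
          = D' m (L.br l a b)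

/-- `D` is an `α^k`-centroid element:
`[(D_μ a)_{λ+μ} α^k(b)] = [α^k(a)_λ (D_μ b)] = D_μ([a_λ b])`. -/
def IsCentroid {R : Type*} [AddCommGroup R] [Module (Polynomial ℂ) R]
    (L : HLCA R) (k : ℕ) (D : Polynomial ℂ → R → R) : Prop :=
  InOmega L D ∧
    ∀ l m a b,
      L.br (l + m) (D m a) ((⇑L.alpha)^[k] b)
          = L.br l ((⇑L.alpha)^[k] a) (D m b) ∧
        L.br (l + m) (D m a) ((⇑L.alpha)^[k] b) = D m (L.br l a b)

/-- `D` is an `α^k`-quasicentroid element: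
`[(D_μ a)_{λ+μ} α^k(b)] = [α^k(a)_λ (D_μ b)]`. -/
def IsQC {R : Type*} [AddCommGroup R] [Module (Polynomial ℂ) R]
    (L : HLCA R) (k : ℕ) (D : Polynomial ℂ → R → R) : Prop :=
  InOmega L D ∧
    ∀ l m a b,
      L.br (l + m) (D m a) ((⇑L.alpha)^[k] b)
        = L.br l ((⇑L.alpha)^[k] a) (D m b)

/-- `D` is an `α^k`-central derivation:
`[(D_μ a)_{λ+μ} α^k(b)] = D_μ([a_λ b]) = 0`. -/
def IsZDer {R : Type*} [AddCommGroup R] [Module (Polynomial ℂ) R]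
    (L : HLCA R) (k : ℕ) (D : Polynomial ℂ → R → R) : Prop :=
  InOmega L D ∧
    ∀ l m a b,
      L.br (l + m) (D m a) ((⇑L.alpha)^[k] b) = 0 ∧ D m (L.br l a b) = 0

/-!
Both composites `D₁_λ ∘ D₂_μ` and `D₂_μ ∘ D₁_λ`, bracketed against `α^{k+s}(b)`, can be moved
across the bracket: the centroid and quasicentroid identities together with `D_λ ∘ α = α ∘ D_λ`
turn each of `[(D₁_λ D₂_μ a)_ν α^{k+s} b]` and `[(D₂_μ D₁_λ a)_ν α^{k+s} b]` into
`[α^{k+s}(a)_{ν-λ-μ} (D₁_λ D₂_μ b)]`. Hence the commutator brackets trivially with every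
`α^{k+s}(b)`, which is every element of `R` since `α` is surjective.
-/

section

variable {R : Type*} [AddCommGroup R] [Module (Polynomial ℂ) R] {L : HLCA R}

lemma HLCA.br_sub_left (L : HLCA R) (l : Polynomial ℂ) (a a' b : R) :
    L.br l (a - a') b = L.br l a b - L.br l a' b := by
  have hneg : L.br l (-a') b = -L.br l a' b := by
    simpa [neg_smul] using L.br_smul_left l (-1) a' b
  rw [sub_eq_add_neg, L.br_add_left, hneg, sub_eq_add_neg]

lemma InOmega.map_iterate {D : Polynomial ℂ → R → R} (hD : InOmega L D) (n : ℕ)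
    (l : Polynomial ℂ) (a : R) :
    D l ((⇑L.alpha)^[n] a) = (⇑L.alpha)^[n] (D l a) := by
  induction n generalizing a with
  | zero => rfl
  | succ n ih =>
    rw [Function.iterate_succ_apply', Function.iterate_succ_apply', hD.2, ih]

lemma IsQC.br_map_left {k : ℕ} {D : Polynomial ℂ → R → R} (hD : IsQC L k D)
    (l m : Polynomial ℂ) (a b : R) :
    L.br l (D m a) ((⇑L.alpha)^[k] b) = L.br (l - m) ((⇑L.alpha)^[k] a) (D m b) := by
  simpa using hD.2 (l - m) m a b

lemma IsCentroid.isQC {k : ℕ} {D : Polynomial ℂ → R → R} (hD : IsCentroid L k D) :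
    IsQC L k D :=
  ⟨hD.1, fun l m a b => (hD.2 l m a b).1⟩

lemma IsCentroid.map_br {k : ℕ} {D : Polynomial ℂ → R → R} (hD : IsCentroid L k D)
    (l m : Polynomial ℂ) (a b : R) :
    D m (L.br l a b) = L.br (l + m) (D m a) ((⇑L.alpha)^[k] b) :=
  (hD.2 l m a b).2.symm

variable {k s : ℕ} {D₁ D₂ : Polynomial ℂ → R → R}

lemma br_centroid_comp_qc_iterate (hD₁ : IsCentroid L k D₁) (hD₂ : IsQC L s D₂)
    (l μ ν : Polynomial ℂ) (a b : R) :
    L.br ν (D₁ l (D₂ μ a)) ((⇑L.alpha)^[k + s] b)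
      = L.br (ν - l - μ) ((⇑L.alpha)^[k + s] a) (D₁ l (D₂ μ b)) := by
  have hν : ν - l + l = ν := by ring
  rw [Function.iterate_add_apply, Function.iterate_add_apply]
  calc L.br ν (D₁ l (D₂ μ a)) ((⇑L.alpha)^[k] ((⇑L.alpha)^[s] b))
      = D₁ l (L.br (ν - l) (D₂ μ a) ((⇑L.alpha)^[s] b)) := by
        rw [hD₁.map_br, hν]
    _ = D₁ l (L.br (ν - l - μ) ((⇑L.alpha)^[s] a) (D₂ μ b)) := by
        rw [hD₂.br_map_left]
    _ = L.br (ν - l - μ) ((⇑L.alpha)^[k] ((⇑L.alpha)^[s] a)) (D₁ l (D₂ μ b)) := by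
        rw [hD₁.map_br, hD₁.isQC.br_map_left, add_sub_cancel_right]

lemma br_qc_comp_centroid_iterate (hD₁ : IsCentroid L k D₁) (hD₂ : IsQC L s D₂)
    (l μ ν : Polynomial ℂ) (a b : R) :
    L.br ν (D₂ μ (D₁ l a)) ((⇑L.alpha)^[k + s] b)
      = L.br (ν - l - μ) ((⇑L.alpha)^[k + s] a) (D₁ l (D₂ μ b)) := by
  rw [add_comm k s, Function.iterate_add_apply, hD₂.br_map_left, ← hD₁.1.map_iterate,
    hD₂.1.map_iterate, hD₁.isQC.br_map_left, ← Function.iterate_add_apply, add_comm s k,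
    sub_right_comm]

lemma br_cComm_iterate_eq_zero (hD₁ : IsCentroid L k D₁) (hD₂ : IsQC L s D₂)
    (l m ν : Polynomial ℂ) (a b : R) :
    L.br ν (cComm D₁ D₂ l m a) ((⇑L.alpha)^[k + s] b) = 0 := by
  rw [cComm, L.br_sub_left, br_centroid_comp_qc_iterate hD₁ hD₂,
    br_qc_comp_centroid_iterate hD₁ hD₂, sub_self]

end

theorem stmt16_general {R : Type*} [AddCommGroup R] [Module (Polynomial ℂ) R]
    (L : HLCA R)
    (hsurj : Function.Surjective L.alpha) (k s : ℕ)
    (D₁ D₂ : Polynomial ℂ → R → R)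
    (hD₁ : IsCentroid L k D₁) (hD₂ : IsQC L s D₂) :
    (∀ l m a, ∀ l' b, L.br l' (cComm D₁ D₂ l m a) b = 0) ∧
      ((∀ c : R, (∀ l' b, L.br l' c b = 0) → c = 0) →
        ∀ l m a, cComm D₁ D₂ l m a = 0) := by
  have central : ∀ l m a, ∀ l' b, L.br l' (cComm D₁ D₂ l m a) b = 0 := by
    intro l m a l' b
    obtain ⟨b, rfl⟩ := hsurj.iterate (k + s) b
    exact br_cComm_iterate_eq_zero hD₁ hD₂ l m l' a b
  exact ⟨central, fun hZ l m a => hZ _ (central l m a)⟩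

/-- Let `(R, α)` be a multiplicative Hom-Lie conformal algebra
with `α` surjective and `Z(R)` the center.  For `D₁ ∈ C_{α^k}(R)` and
`D₂ ∈ QC_{α^s}(R)` the commutator `[D₁_μ D₂]` takes values in `Z(R)[μ]`;
moreover if `Z(R) = 0` then `[C(R)_λ QC(R)] = 0`. -/
theorem stmt16 {R : Type*} [AddCommGroup R] [Module (Polynomial ℂ) R]
    (L : HLCA R) (hL : L.Multiplicative)
    (hsurj : Function.Surjective L.alpha) (k s : ℕ)
    (D₁ D₂ : Polynomial ℂ → R → R)
    (hD₁ : IsCentroid L k D₁) (hD₂ : IsQC L s D₂) :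
    (∀ l m a, ∀ l' b, L.br l' (cComm D₁ D₂ l m a) b = 0) ∧
      ((∀ c : R, (∀ l' b, L.br l' c b = 0) → c = 0) →
        ∀ l m a, cComm D₁ D₂ l m a = 0) :=
  stmt16_general L hsurj k s D₁ D₂ hD₁ hD₂
end

section
/- Let (R, α) be a multiplicative Hom-Lie conformal algebra with α surjective and Z(R) = 0. Then QC(R) is closed under the conformal commutator (i.e., forms a Hom-Lie conformal algebra) if and only if [QC(R)_λ QC(R)] = 0. -/
open Polynomial

/-! Composites of quasicentroid elements can be moved across the λ-bracket, and doing so for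
both composites in a commutator `c = [D_λ H]_μ a` flips the sign of `[x_ν c]`. If `[D_λ H]` is
itself a quasicentroid element, the same move is sign-free, so `[x_ν c] = 0` for all `x` in the
image of a power of `α`, i.e. for all `x` when `α` is surjective; by skew-symmetry `c` is then
central, hence zero. -/

lemma eq_zero_of_eq_neg_of_isUnit_two {A M : Type*} [Ring A] [AddCommGroup M] [Module A M]
    (h2 : IsUnit (2 : A)) {u : M} (h : u = -u) : u = 0 := by
  rw [← h2.smul_eq_zero, two_smul]
  exact eq_neg_iff_add_eq_zero.mp h

lemma Polynomial.isUnit_two_complex : IsUnit (2 : ℂ[X]) := by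
  rw [← map_ofNat C 2]
  exact isUnit_C.mpr (by norm_num)

section

variable {R : Type*} [AddCommGroup R] [Module ℂ[X] R]

namespace HLCA

variable (L : HLCA R)

lemma br_sub_left_s17 (l : ℂ[X]) (a a' b : R) :
    L.br l (a - a') b = L.br l a b - L.br l a' b :=
  (AddMonoidHom.mk' (fun x => L.br l x b) fun x y => L.br_add_left l x y b).map_sub a a'

lemma br_sub_right (l : ℂ[X]) (a b b' : R) :
    L.br l a (b - b') = L.br l a b - L.br l a b' :=
  (AddMonoidHom.mk' (L.br l a) (L.br_add_right l a)).map_sub b b'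

lemma br_zero_left (l : ℂ[X]) (b : R) : L.br l 0 b = 0 := by
  simpa using L.br_sub_left_s17 l 0 0 b

lemma br_zero_right (l : ℂ[X]) (a : R) : L.br l a 0 = 0 := by
  simpa using L.br_sub_right l a 0 0

lemma eq_zero_of_forall_br_right_eq_zero
    (hZ : ∀ c : R, (∀ l a, L.br l c a = 0) → c = 0) {c : R}
    (hc : ∀ l x, L.br l x c = 0) : c = 0 :=
  hZ c fun l x => by rw [L.skew, hc, neg_zero]

end HLCA

variable {L : HLCA R}

lemma InOmega.iterate_alpha_comm {D : ℂ[X] → R → R} (hD : InOmega L D) (k : ℕ) (l : ℂ[X])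
    (a : R) : D l ((⇑L.alpha)^[k] a) = (⇑L.alpha)^[k] (D l a) :=
  Function.Commute.iterate_right (hD.2 l) k a

lemma isQC_zero (k : ℕ) : IsQC L k fun _ _ => 0 :=
  ⟨⟨⟨fun _ _ _ => (add_zero 0).symm, fun _ _ _ => (smul_zero _).symm,
      fun _ _ => (smul_zero _).symm⟩, fun _ _ => (map_zero L.alpha).symm⟩,
    fun l m _ _ => by rw [L.br_zero_left, L.br_zero_right]⟩

lemma IsQC.br_comp {k s : ℕ} {D H : ℂ[X] → R → R} (hD : IsQC L k D) (hH : IsQC L s H)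
    (l m ν : ℂ[X]) (a b : R) :
    L.br (l + m) (D ν (H (m - ν) a)) ((⇑L.alpha)^[k + s] b)
      = L.br l ((⇑L.alpha)^[k + s] a) (H (m - ν) (D ν b)) := by
  have hDH := hD.2 (l + m - ν) ν (H (m - ν) a) ((⇑L.alpha)^[s] b)
  have hHD := hH.2 l (m - ν) ((⇑L.alpha)^[k] a) (D ν b)
  rw [sub_add_cancel, add_sub_assoc] at hDH
  rw [Function.iterate_add_apply, hDH, ← hH.1.iterate_alpha_comm, hD.1.iterate_alpha_comm,
    hHD, add_comm k, Function.iterate_add_apply]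

lemma IsQC.br_cComm {k s : ℕ} {D H : ℂ[X] → R → R} (hD : IsQC L k D) (hH : IsQC L s H)
    (l m ν : ℂ[X]) (a b : R) :
    L.br (ν + m) (cComm D H l m a) ((⇑L.alpha)^[k + s] b)
      = -L.br ν ((⇑L.alpha)^[k + s] a) (cComm D H l m b) := by
  have hDH := hD.br_comp hH ν m l a b
  have hHD := hH.br_comp hD ν m (m - l) a b
  rw [sub_sub_cancel, add_comm s] at hHD
  rw [cComm, cComm, L.br_sub_left_s17, L.br_sub_right, hDH, hHD, neg_sub]

lemma IsQC.cComm_eq_zero {k s : ℕ} {D H : ℂ[X] → R → R} (hD : IsQC L k D) (hH : IsQC L s H)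
    (hsurj : Function.Surjective L.alpha) (hZ : ∀ c : R, (∀ l a, L.br l c a = 0) → c = 0)
    (l : ℂ[X]) (hDH : IsQC L (k + s) (cComm D H l)) (m : ℂ[X]) (a : R) :
    cComm D H l m a = 0 := by
  refine L.eq_zero_of_forall_br_right_eq_zero hZ fun ν x => ?_
  obtain ⟨y, rfl⟩ := hsurj.iterate (k + s) x
  refine eq_zero_of_eq_neg_of_isUnit_two Polynomial.isUnit_two_complex ?_
  rw [← hD.br_cComm hH, hDH.2]

end

theorem stmt17_general {R : Type*} [AddCommGroup R] [Module (Polynomial ℂ) R]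
    (L : HLCA R)
    (hsurj : Function.Surjective L.alpha)
    (hZ : ∀ c : R, (∀ l a, L.br l c a = 0) → c = 0) :
    (∀ (k s : ℕ) (D H : Polynomial ℂ → R → R),
        IsQC L k D → IsQC L s H → ∀ l, IsQC L (k + s) (cComm D H l))
      ↔
    (∀ (k s : ℕ) (D H : Polynomial ℂ → R → R),
        IsQC L k D → IsQC L s H → ∀ l m a, cComm D H l m a = 0) := by
  constructor
  · intro hclosed k s D H hD hH l
    exact hD.cComm_eq_zero hH hsurj hZ l (hclosed k s D H hD hH l)
  · intro htrivial k s D H hD hH l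
    have hzero : cComm D H l = fun _ _ => 0 := funext₂ (htrivial k s D H hD hH l)
    exact hzero ▸ isQC_zero (k + s)

/-- Let `(R, α)` be a multiplicative Hom-Lie conformal algebra
with `α` surjective and trivial center.  Then `QC(R)` is closed under the
conformal commutator (i.e. forms a Hom-Lie conformal algebra) if and only if
`[QC(R)_λ QC(R)] = 0`. -/
theorem stmt17 {R : Type*} [AddCommGroup R] [Module (Polynomial ℂ) R]
    (L : HLCA R) (hL : L.Multiplicative)
    (hsurj : Function.Surjective L.alpha)
    (hZ : ∀ c : R, (∀ l a, L.br l c a = 0) → c = 0) :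
    (∀ (k s : ℕ) (D H : Polynomial ℂ → R → R),
        IsQC L k D → IsQC L s H → ∀ l, IsQC L (k + s) (cComm D H l))
      ↔
    (∀ (k s : ℕ) (D H : Polynomial ℂ → R → R),
        IsQC L k D → IsQC L s H → ∀ l m a, cComm D H l m a = 0) :=
  stmt17_general L hsurj hZ
end
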